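/- arXiv:2605.28746 — 2 statements merged into one kernel-verified Lean document; each statement's English description precedes it below -/
import Mathlib

section
/- (Monotonicity of the R₂ scalarization envelope) Let A and B be finite nonempty subsets of ℝᵐ and r ∈ ℝᵐ with Dom_r(B) ⊆ Dom_r(A). Then for every weight λ in the simplex, h_A(λ) ≤ h_B(λ), and consequently ∫ (h_r(λ) − h_A(λ))₊ ρ(λ) dσ(λ) ≥ ∫ (h_r(λ) − h_B(λ))₊ ρ(λ) dσ(λ) for any nonnegative integrable weight density ρ. -/
open MeasureTheory

variable {m : ℕ}

/-- Weighted Tchebycheff scalarization with utopian point `z` in `m` objectives. -/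
noncomputable def tcheb [NeZero m] (z lam : Fin m → ℝ) (y : Fin m → ℝ) : ℝ :=
  Finset.univ.sup' Finset.univ_nonempty (fun i => lam i * (y i - z i))

/-- Scalarization envelope of a finite nonempty set. -/
noncomputable def env [NeZero m] (z : Fin m → ℝ) (A : Finset (Fin m → ℝ))
    (hA : A.Nonempty) (lam : Fin m → ℝ) : ℝ :=
  A.inf' hA (fun a => tcheb z lam a)

/-- Dominated region of a finite set bounded by reference point `r`. -/
def dom (A : Finset (Fin m → ℝ)) (r : Fin m → ℝ) : Set (Fin m → ℝ) :=
  ⋃ a ∈ A, Set.Icc a r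

/-- The unit weight simplex. -/
def simplex (m : ℕ) : Set (Fin m → ℝ) :=
  {lam | (∀ i, 0 ≤ lam i) ∧ ∑ i, lam i = 1}

lemma simplex_measurable : MeasurableSet (simplex m) := by
  have : simplex m = (⋂ i, {lam : Fin m → ℝ | 0 ≤ lam i}) ∩
      {lam : Fin m → ℝ | ∑ i, lam i = 1} := by
    ext lam; simp [simplex, Set.mem_iInter]
  rw [this]
  apply MeasurableSet.inter
  · exact MeasurableSet.iInter fun i =>
      measurableSet_le measurable_const (measurable_pi_apply i)
  · exact measurableSet_eq_fun (by fun_prop) measurable_const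

theorem envelope_monotonicity [NeZero m]
    (z r : Fin m → ℝ)
    (A B : Finset (Fin m → ℝ)) (hA : A.Nonempty) (hB : B.Nonempty)
    (hzA : ∀ a ∈ A, ∀ i, z i ≤ a i) (hAr : ∀ a ∈ A, ∀ i, a i ≤ r i)
    (hBr : ∀ b ∈ B, ∀ i, b i ≤ r i)
    (hdom : dom B r ⊆ dom A r) :
    (∀ lam ∈ simplex m, env z A hA lam ≤ env z B hB lam) ∧
    ∀ (σ : Measure (Fin m → ℝ)) (ρ : (Fin m → ℝ) → ℝ),
      (∀ lam, 0 ≤ ρ lam) →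
      IntegrableOn (fun lam => max (tcheb z lam r - env z A hA lam) 0 * ρ lam)
        (simplex m) σ →
      IntegrableOn (fun lam => max (tcheb z lam r - env z B hB lam) 0 * ρ lam)
        (simplex m) σ →
      ∫ lam in simplex m, max (tcheb z lam r - env z B hB lam) 0 * ρ lam ∂σ ≤
        ∫ lam in simplex m, max (tcheb z lam r - env z A hA lam) 0 * ρ lam ∂σ := by
  have key : ∀ lam ∈ simplex m, env z A hA lam ≤ env z B hB lam := by
    intro lam hlam
    simp only [env]; rw [Finset.le_inf'_iff]
    intro b hb
    -- b ∈ dom B r since b ≤ b ≤ r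
    have hbdom : b ∈ dom B r := by
      refine Set.mem_iUnion₂.2 ⟨b, hb, ?_⟩
      exact ⟨le_refl b, fun i => hBr b hb i⟩
    obtain ⟨a, ha, hab⟩ := Set.mem_iUnion₂.1 (hdom hbdom)
    have hab1 : ∀ i, a i ≤ b i := hab.1
    have : tcheb z lam a ≤ tcheb z lam b := by
      rw [tcheb, Finset.sup'_le_iff]
      intro i _
      refine le_trans ?_ (Finset.le_sup' (fun i => lam i * (b i - z i))
        (Finset.mem_univ i))
      exact mul_le_mul_of_nonneg_left (by linarith [hab1 i]) (hlam.1 i)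
    calc env z A hA lam ≤ tcheb z lam a := Finset.inf'_le _ ha
    _ ≤ tcheb z lam b := this
  refine ⟨key, ?_⟩
  intro σ ρ hρ hIA hIB
  apply setIntegral_mono_on hIB hIA simplex_measurable
  intro lam hlam
  have h := key lam hlam
  have : max (tcheb z lam r - env z B hB lam) 0 ≤
      max (tcheb z lam r - env z A hA lam) 0 := by
    apply max_le_max _ le_rfl
    linarith
  exact mul_le_mul_of_nonneg_right this (hρ lam)
end

section
/- (Kernel negativity breaks Pareto monotonicity) Let K ∈ L¹(Ω) with Ω = [0,1]ᵐ. If there is an axis-aligned box Q = ∏ᵢ[αᵢ,βᵢ] ⊆ Ω with ∫_Q K(y) dy < 0, then with a = (α₁,…,α_m), b⁽ⁱ⁾ = a except with i-th coordinate βᵢ, A = {a}, and B = {b⁽¹⁾,…,b⁽ᵐ⁾} and r = (1,…,1), one has Dom_r(B) ⊆ Dom_r(A), Dom_r(A) \ Dom_r(B) equals Q up to a Lebesgue null set, and WHV_{K,r}(A) − WHV_{K,r}(B) = ∫_Q K(y) dy < 0. -/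
/-!
A point of the box `[α, 1]` escapes every box `[b⁽ⁱ⁾, 1]` exactly when each coordinate `yᵢ` lies
below `βᵢ`, so `Dom(A) \ Dom(B)` is the half-open box `∏ᵢ [αᵢ, βᵢ)`, which agrees with `Q` off a
null set. Since `Dom(B) ⊆ Dom(A)`, the difference of the two integrals is the integral over
`Dom(A) \ Dom(B)`, i.e. over `Q`.
-/

open MeasureTheory

variable {m : ℕ}

open Set Function

section Boxes

variable {ι X : Type*} [DecidableEq ι] {a b r y : ι → X}

theorem mem_Icc_update_iff_of_le [Preorder X] (hay : a ≤ y) (i : ι) (c : X) :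
    y ∈ Icc (update a i c) r ↔ c ≤ y i ∧ y ≤ r := by
  simp only [mem_Icc, update_le_iff]
  exact ⟨fun h => ⟨h.1.1, h.2⟩, fun h => ⟨⟨h.1, fun j _ => hay j⟩, h.2⟩⟩

theorem iUnion_Icc_update_subset_Icc [Preorder X] (hab : a ≤ b) :
    ⋃ i, Icc (update a i (b i)) r ⊆ Icc a r :=
  iUnion_subset fun i => Icc_subset_Icc_left <| le_update_iff.2 ⟨hab i, fun _ _ => le_rfl⟩

theorem Icc_sdiff_iUnion_Icc_update [LinearOrder X] (hbr : b ≤ r) :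
    Icc a r \ ⋃ i, Icc (update a i (b i)) r = pi univ fun i => Ico (a i) (b i) := by
  ext y
  simp only [mem_sdiff, mem_iUnion, not_exists, mem_univ_pi, mem_Ico]
  constructor
  · rintro ⟨hy, hnot⟩ i
    refine ⟨hy.1 i, lt_of_not_ge fun hby => hnot i ?_⟩
    exact (mem_Icc_update_iff_of_le hy.1 i _).2 ⟨hby, hy.2⟩
  · intro hy
    have hay : a ≤ y := fun i => (hy i).1
    refine ⟨⟨hay, fun i => ((hy i).2.trans_le (hbr i)).le⟩, fun i hi => ?_⟩
    exact ((hy i).2).not_ge ((mem_Icc_update_iff_of_le hay i _).1 hi).1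

end Boxes

theorem dom_singleton (a r : Fin m → ℝ) : dom {a} r = Icc a r := by
  simp [dom]

theorem dom_image_univ (f : Fin m → Fin m → ℝ) (r : Fin m → ℝ) :
    dom (Finset.univ.image f) r = ⋃ i, Icc (f i) r := by
  simp [dom]

theorem negative_kernel_breaks_pareto_monotonicity_general
    (K : (Fin m → ℝ) → ℝ)
    (hKint : IntegrableOn K (Set.Icc (fun _ => (0 : ℝ)) (fun _ => 1)))
    (α β : Fin m → ℝ) (hαβ : ∀ i, α i ≤ β i)
    (hQsub : Set.Icc α β ⊆ Set.Icc (fun _ => (0 : ℝ)) (fun _ => 1))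
    (hQneg : ∫ y in Set.Icc α β, K y < 0) :
    dom (Finset.image (fun i => Function.update α i (β i)) Finset.univ)
        (fun _ => 1) ⊆ dom {α} (fun _ => 1) ∧
    volume (symmDiff
      (dom {α} (fun _ => 1) \
        dom (Finset.image (fun i => Function.update α i (β i)) Finset.univ) (fun _ => 1))
      (Set.Icc α β)) = 0 ∧
    (∫ y in dom {α} (fun _ => 1), K y) -
      (∫ y in dom (Finset.image (fun i => Function.update α i (β i)) Finset.univ)
        (fun _ => 1), K y) = ∫ y in Set.Icc α β, K y ∧
    ∫ y in Set.Icc α β, K y < 0 := by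
  have hα0 : (fun _ => 0) ≤ α := (hQsub ⟨le_rfl, hαβ⟩).1
  have hβ1 : β ≤ fun _ => 1 := (hQsub ⟨hαβ, le_rfl⟩).2
  have hdiff_ae : (Icc α (fun _ => 1) \ ⋃ i, Icc (update α i (β i)) (fun _ => 1) :
      Set (Fin m → ℝ)) =ᵐ[volume] Icc α β := by
    rw [Icc_sdiff_iUnion_Icc_update hβ1]
    exact Measure.univ_pi_Ico_ae_eq_Icc
  have hsub := iUnion_Icc_update_subset_Icc (r := fun _ => (1 : ℝ)) hαβ
  rw [dom_singleton, dom_image_univ]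
  refine ⟨hsub, measure_symmDiff_eq_zero_iff.2 hdiff_ae, ?_, hQneg⟩
  rw [← setIntegral_sdiff (MeasurableSet.iUnion fun _ => measurableSet_Icc)
    (hKint.mono_set (Icc_subset_Icc_left hα0)) hsub]
  exact setIntegral_congr_set hdiff_ae

theorem negative_kernel_breaks_pareto_monotonicity [NeZero m]
    (K : (Fin m → ℝ) → ℝ)
    (hKint : IntegrableOn K (Set.Icc (fun _ => (0 : ℝ)) (fun _ => 1)))
    (α β : Fin m → ℝ) (hαβ : ∀ i, α i ≤ β i)
    (hQsub : Set.Icc α β ⊆ Set.Icc (fun _ => (0 : ℝ)) (fun _ => 1))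
    (hQneg : ∫ y in Set.Icc α β, K y < 0) :
    dom (Finset.image (fun i => Function.update α i (β i)) Finset.univ)
        (fun _ => 1) ⊆ dom {α} (fun _ => 1) ∧
    volume (symmDiff
      (dom {α} (fun _ => 1) \
        dom (Finset.image (fun i => Function.update α i (β i)) Finset.univ) (fun _ => 1))
      (Set.Icc α β)) = 0 ∧
    (∫ y in dom {α} (fun _ => 1), K y) -
      (∫ y in dom (Finset.image (fun i => Function.update α i (β i)) Finset.univ)
        (fun _ => 1), K y) = ∫ y in Set.Icc α β, K y ∧
    ∫ y in Set.Icc α β, K y < 0 :=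
  negative_kernel_breaks_pareto_monotonicity_general K hKint α β hαβ hQsub hQneg
end
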